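/- Let x_1,...,x_n ∈ ℝ^d be distinct and suppose index l and coordinate k satisfy x_l^{(k)} ≤ x_j^{(k)} for all j ≠ l with strict inequality for some j. Then the matrix ∂L(x)/∂x_l^{(k)} (the entrywise partial derivative of the weighted Laplacian with sigmoid weights) is symmetric, positive semi-definite, and nonzero. -/

import Mathlib

open Matrix

noncomputable def sigmoid (w y : ℝ) : ℝ := 1 / (1 + Real.exp (-w * y))

noncomputable def sigmoidDeriv (w y : ℝ) : ℝ := w * sigmoid w y * (1 - sigmoid w y)

/-- Entrywise partial derivative of the weighted adjacency matrix with respect to the `k`-th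
coordinate of node `l`. -/
noncomputable def dAdj {n d : ℕ} (w ε : ℝ) (x : Fin n → EuclideanSpace ℝ (Fin d))
    (l : Fin n) (k : Fin d) : Matrix (Fin n) (Fin n) ℝ :=
  fun i j =>
    if i = j then 0
    else if i = l then
      -sigmoidDeriv w (ε - ‖x l - x j‖) * (x l k - x j k) / ‖x l - x j‖
    else if j = l then
      -sigmoidDeriv w (ε - ‖x l - x i‖) * (x l k - x i k) / ‖x l - x i‖
    else 0

/-- Entrywise partial derivative of the weighted Laplacian. -/
noncomputable def dLap {n d : ℕ} (w ε : ℝ) (x : Fin n → EuclideanSpace ℝ (Fin d))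
    (l : Fin n) (k : Fin d) : Matrix (Fin n) (Fin n) ℝ :=
  Matrix.diagonal (fun i => ∑ j, dAdj w ε x l k i j) - dAdj w ε x l k

/-!
Since `x l` is minimal in coordinate `k`, every nonzero entry of `∂A/∂x_l^{(k)}` is a product of
`-σ'_w < 0` and `x_l^{(k)} - x_j^{(k)} ≤ 0`, divided by a norm, so `∂L/∂x_l^{(k)}` is the Laplacian
`Δ - A` of a symmetric weight matrix with nonnegative entries. Its quadratic form is
`½ ∑ᵢⱼ aᵢⱼ (vᵢ - vⱼ)²`, and a point strictly above `x l` in coordinate `k` gives a positive weight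
`a_lj`, hence a positive diagonal entry `L_ll`.
-/

namespace Matrix

variable {ι R : Type*} [Fintype ι] [DecidableEq ι]

def laplacian [AddCommGroup R] (A : Matrix ι ι R) : Matrix ι ι R :=
  diagonal (fun i => ∑ j, A i j) - A

theorem IsSymm.laplacian [AddCommGroup R] {A : Matrix ι ι R} (hA : A.IsSymm) :
    A.laplacian.IsSymm :=
  (isSymm_diagonal _).sub hA

theorem IsSymm.two_mul_dotProduct_laplacian_mulVec [CommRing R] {A : Matrix ι ι R}
    (hA : A.IsSymm) (v : ι → R) :
    2 * (v ⬝ᵥ A.laplacian *ᵥ v) = ∑ i, ∑ j, A i j * (v i - v j) ^ 2 := by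
  have hswap : ∑ i, ∑ j, A i j * v j ^ 2 = ∑ i, ∑ j, A i j * v i ^ 2 := by
    rw [Finset.sum_comm]
    exact Finset.sum_congr rfl fun i _ => Finset.sum_congr rfl fun j _ => by rw [hA.apply]
  have hquad : v ⬝ᵥ A.laplacian *ᵥ v =
      ∑ i, ∑ j, A i j * v i ^ 2 - ∑ i, ∑ j, A i j * (v i * v j) := by
    simp only [Matrix.laplacian, sub_mulVec, dotProduct_sub]
    simp only [dotProduct, mulVec_diagonal]
    simp only [mulVec, dotProduct, Finset.mul_sum, Finset.sum_mul]
    congr 1 <;> exact Finset.sum_congr rfl fun i _ => Finset.sum_congr rfl fun j _ => by ring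
  have hexpand : ∀ i j, A i j * (v i - v j) ^ 2 =
      A i j * v i ^ 2 + A i j * v j ^ 2 - 2 * (A i j * (v i * v j)) := fun i j => by ring
  simp only [hexpand, Finset.sum_add_distrib, Finset.sum_sub_distrib, ← Finset.mul_sum, hswap,
    hquad]
  ring

theorem IsSymm.posSemidef_laplacian [CommRing R] [LinearOrder R] [IsStrictOrderedRing R]
    [StarRing R] [TrivialStar R] {A : Matrix ι ι R} (hA : A.IsSymm) (hA₀ : ∀ i j, 0 ≤ A i j) :
    A.laplacian.PosSemidef := by
  refine .of_dotProduct_mulVec_nonneg (isHermitian_iff_isSymm.mpr hA.laplacian) fun v => ?_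
  rw [star_trivial, ← mul_nonneg_iff_of_pos_left (two_pos (α := R)),
    hA.two_mul_dotProduct_laplacian_mulVec]
  exact Finset.sum_nonneg fun i _ => Finset.sum_nonneg fun j _ =>
    mul_nonneg (hA₀ i j) (sq_nonneg _)

theorem laplacian_apply_self [AddCommGroup R] (A : Matrix ι ι R) (i : ι) :
    A.laplacian i i = ∑ j ∈ Finset.univ.erase i, A i j := by
  rw [laplacian, sub_apply, diagonal_apply_eq, ← Finset.add_sum_erase _ _ (Finset.mem_univ i),
    add_sub_cancel_left]

theorem laplacian_ne_zero [AddCommGroup R] [PartialOrder R] [IsOrderedAddMonoid R]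
    {A : Matrix ι ι R} {i j : ι} (hA₀ : ∀ j, 0 ≤ A i j) (hij : i ≠ j) (hpos : 0 < A i j) :
    A.laplacian ≠ 0 := by
  have hdiag : 0 < A.laplacian i i := by
    rw [laplacian_apply_self]
    exact hpos.trans_le <| Finset.single_le_sum (fun j _ => hA₀ j)
      (Finset.mem_erase.mpr ⟨hij.symm, Finset.mem_univ j⟩)
  intro h
  simp [h] at hdiag

end Matrix

lemma sigmoid_pos (w y : ℝ) : 0 < sigmoid w y := by
  unfold sigmoid; positivity

lemma sigmoid_lt_one (w y : ℝ) : sigmoid w y < 1 := by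
  unfold sigmoid
  rw [div_lt_one (by positivity)]
  linarith [Real.exp_pos (-w * y)]

lemma sigmoidDeriv_pos {w : ℝ} (hw : 0 < w) (y : ℝ) : 0 < sigmoidDeriv w y :=
  mul_pos (mul_pos hw (sigmoid_pos w y)) (sub_pos.mpr (sigmoid_lt_one w y))

lemma dAdj_isSymm {n d : ℕ} (w ε : ℝ) (x : Fin n → EuclideanSpace ℝ (Fin d)) (l : Fin n)
    (k : Fin d) : (dAdj w ε x l k).IsSymm := by
  refine Matrix.IsSymm.ext fun i j => ?_
  unfold dAdj
  rcases eq_or_ne i j with rfl | h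
  · rfl
  by_cases hi : i = l <;> by_cases hj : j = l <;> subst_vars <;> simp_all [h.symm]

section dAdj

variable {n d : ℕ} {w : ℝ} (ε : ℝ) {x : Fin n → EuclideanSpace ℝ (Fin d)} {l : Fin n} {k : Fin d}

lemma dAdj_nonneg (hw : 0 < w) (hmin : ∀ j, j ≠ l → x l k ≤ x j k) (i j : Fin n) :
    0 ≤ dAdj w ε x l k i j := by
  have hterm : ∀ m, m ≠ l →
      0 ≤ -sigmoidDeriv w (ε - ‖x l - x m‖) * (x l k - x m k) / ‖x l - x m‖ := fun m hm =>
    div_nonneg (mul_nonneg_of_nonpos_of_nonpos (neg_nonpos.mpr (sigmoidDeriv_pos hw _).le)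
      (sub_nonpos.mpr (hmin m hm))) (norm_nonneg _)
  unfold dAdj
  split_ifs with hij hil hjl
  exacts [le_rfl, hterm j (hil ▸ Ne.symm hij), hterm i hil, le_rfl]

lemma dAdj_pos (hw : 0 < w) {j : Fin n} (hjl : j ≠ l) (hlt : x l k < x j k) :
    0 < dAdj w ε x l k l j := by
  have hne : x l ≠ x j := fun h => hlt.ne (by rw [h])
  rw [dAdj, if_neg hjl.symm, if_pos rfl]
  exact div_pos (mul_pos_of_neg_of_neg (neg_neg_of_pos (sigmoidDeriv_pos hw _))
    (sub_neg.mpr hlt)) (norm_pos_iff.mpr (sub_ne_zero.mpr hne))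

end dAdj

lemma dLap_eq_laplacian {n d : ℕ} (w ε : ℝ) (x : Fin n → EuclideanSpace ℝ (Fin d)) (l : Fin n)
    (k : Fin d) : dLap w ε x l k = (dAdj w ε x l k).laplacian :=
  rfl

theorem stmt9_general {n d : ℕ} (w ε : ℝ) (hw : 0 < w)
    (x : Fin n → EuclideanSpace ℝ (Fin d))
    (l : Fin n) (k : Fin d)
    (hmin : ∀ j, j ≠ l → x l k ≤ x j k) (hstrict : ∃ j, j ≠ l ∧ x l k < x j k) :
    (dLap w ε x l k).IsSymm ∧ (dLap w ε x l k).PosSemidef ∧ dLap w ε x l k ≠ 0 := by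
  obtain ⟨j, hjl, hlt⟩ := hstrict
  rw [dLap_eq_laplacian]
  exact ⟨(dAdj_isSymm w ε x l k).laplacian,
    (dAdj_isSymm w ε x l k).posSemidef_laplacian (dAdj_nonneg ε hw hmin),
    Matrix.laplacian_ne_zero (dAdj_nonneg ε hw hmin l) hjl.symm (dAdj_pos ε hw hjl hlt)⟩

/-- if `x l` is coordinate-`k` minimal among the distinct points, strictly for some
point, then `∂L(x)/∂x_l^{(k)}` is symmetric, positive semi-definite, and nonzero. -/
theorem stmt9 {n d : ℕ} (hn : 2 ≤ n) (w ε : ℝ) (hw : 0 < w) (hε : 0 < ε)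
    (x : Fin n → EuclideanSpace ℝ (Fin d)) (hx : Function.Injective x)
    (l : Fin n) (k : Fin d)
    (hmin : ∀ j, j ≠ l → x l k ≤ x j k) (hstrict : ∃ j, j ≠ l ∧ x l k < x j k) :
    (dLap w ε x l k).IsSymm ∧ (dLap w ε x l k).PosSemidef ∧ dLap w ε x l k ≠ 0 :=
  stmt9_general w ε hw x l k hmin hstrict
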